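/- The ion background can be made arbitrarily close to constant: Suppose ∫_ℝ μ(v²/2) dv = 1, and let φ̃₀ satisfy assumptions (φ1)–(φ4) with ‖φ̃₀‖_{C²(T¹)} < 1. For δ ∈ (0,1) set φ₀ := δ φ̃₀ and ρ₊(x) := −φ₀''(x) + ε ∫_ℝ μ(ε²(v²/2 − φ₀(x))) dv. Then for every x, |ρ₊(x) − 1| ≤ δ‖φ̃₀''‖_∞ + |∫_ℝ μ(ṽ²/2 − ε²φ₀(x)) dṽ − 1|, and consequently for all sufficiently small ε > 0 one has ‖ρ₊ − 1‖_{L^∞(T¹)} ≤ 2δ. -/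

import Mathlib

noncomputable section

open MeasureTheory Set Filter Topology

namespace BGK

/-- The particle energy `E(x,v) = v²/2 − φ₀(x)`. -/
def energy (φ₀ : ℝ → ℝ) (x v : ℝ) : ℝ := v ^ 2 / 2 - φ₀ x

/-- Assumptions (φ1)–(φ2) on the steady electrostatic potential `φ₀`,
viewed as a `1`-periodic function on `ℝ`. -/
structure PotentialHyp (φ₀ : ℝ → ℝ) (x₀ : ℝ) : Prop where
  periodic : Function.Periodic φ₀ 1
  smooth : ContDiff ℝ 3 φ₀
  nonneg : ∀ x, 0 ≤ φ₀ x
  zero : φ₀ 0 = 0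
  x₀_mem : x₀ ∈ Ioo (0 : ℝ) 1
  max_pos : 0 < φ₀ x₀
  uniq_max : ∀ x ∈ Icc (0 : ℝ) 1, x ≠ x₀ → φ₀ x < φ₀ x₀
  mono_incr : StrictMonoOn φ₀ (Icc 0 x₀)
  mono_decr : StrictAntiOn φ₀ (Icc x₀ 1)
  convex_zero : ∃ δ > 0, StrictConvexOn ℝ (Ioo (-δ) δ) φ₀
  convex_one : ∃ δ > 0, StrictConvexOn ℝ (Ioo (1 - δ) (1 + δ)) φ₀
  concave_max : ∃ δ > 0, StrictConcaveOn ℝ (Ioo (x₀ - δ) (x₀ + δ)) φ₀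

/-- The turning points `x₋(E) < x₊(E)` of the characteristic flow:
`φ₀(x₋(E)) = φ₀(x₊(E)) = −E` for trapped energies, and `x₋(E) = 0`, `x₊(E) = 1`
outside the separatrix. -/
structure TurningHyp (φ₀ : ℝ → ℝ) (x₀ : ℝ) (xm xp : ℝ → ℝ) : Prop where
  xm_mem : ∀ E ∈ Ioo (-(φ₀ x₀)) 0, xm E ∈ Ioo 0 x₀
  xp_mem : ∀ E ∈ Ioo (-(φ₀ x₀)) 0, xp E ∈ Ioo x₀ 1
  xm_eq : ∀ E ∈ Ioo (-(φ₀ x₀)) 0, φ₀ (xm E) = -E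
  xp_eq : ∀ E ∈ Ioo (-(φ₀ x₀)) 0, φ₀ (xp E) = -E
  xm_out : ∀ E : ℝ, 0 < E → xm E = 0
  xp_out : ∀ E : ℝ, 0 < E → xp E = 1

/-- The period function `T(E)`. -/
def period (φ₀ xm xp : ℝ → ℝ) (E : ℝ) : ℝ :=
  if E < 0 then 2 * ∫ y in (xm E)..(xp E), (Real.sqrt (2 * (E + φ₀ y)))⁻¹
  else ∫ y in (0 : ℝ)..(1 : ℝ), (Real.sqrt (2 * (E + φ₀ y)))⁻¹

/-- Assumption (φ4): monotonicity of the period function on the trapped region. -/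
def PeriodMonotone (φ₀ : ℝ → ℝ) (x₀ : ℝ) (xm xp : ℝ → ℝ) : Prop :=
  ∀ E ∈ Ioo (-(φ₀ x₀)) 0, deriv (period φ₀ xm xp) E ≠ 0

/-- Assumptions (μ1)–(μ4) on the microscopic equation of state `μ`,
defined on `(h,∞)` with `h ∈ [−∞,0)`. -/
structure MuHyp (h : EReal) (μ : ℝ → ℝ) : Prop where
  neg : h < 0
  pos : ∀ e : ℝ, h < (e : EReal) → 0 < μ e
  holder : ∃ C : NNReal, HolderOnWith C (1 / 2 : NNReal) μ {e : ℝ | h < (e : EReal)}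
  c2_neg : ContDiffOn ℝ 2 μ {e : ℝ | h < (e : EReal) ∧ e ≤ 0}
  c0_pos : ContinuousOn μ (Ici 0)
  c2_pos : ContDiffOn ℝ 2 μ (Ioi 0)
  bound_small : ∃ C : ℝ, ∀ e : ℝ, 0 < e → e < 1 →
    |deriv μ e| ≤ C * e ^ (-(1 : ℝ) / 2) ∧ |deriv (deriv μ) e| ≤ C * e ^ (-(3 : ℝ) / 2)
  bound_tail : ∃ C : ℝ, ∀ e : ℝ, 1 ≤ e →
    |deriv μ e| ≤ C / (1 + e) ∧ |deriv (deriv μ) e| ≤ C / (1 + e ^ 2)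
  int_tail : IntegrableOn (fun e : ℝ => |deriv μ e| * Real.sqrt e) (Ioi (0 : ℝ))
  mono_neg : StrictAntiOn μ {e : ℝ | h < (e : EReal) ∧ e ≤ 0} ∨
    StrictMonoOn μ {e : ℝ | h < (e : EReal) ∧ e ≤ 0}
  mono_pos : StrictAntiOn μ (Ioi 0)

/-- The weight `|μ'(ε²E(x,v))|` of the Hilbert space `H`. -/
def weight (φ₀ μ : ℝ → ℝ) (ε x v : ℝ) : ℝ := |deriv μ (ε ^ 2 * energy φ₀ x v)|

/-- Lebesgue measure on the periodic strip `Ω = 𝕋¹ × ℝ`. -/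
def strip : Measure (ℝ × ℝ) :=
  (volume : Measure (ℝ × ℝ)).restrict (Ioc (0 : ℝ) 1 ×ˢ (univ : Set ℝ))

/-- Squared norm of the weighted Hilbert space `H`. -/
def Hnormsq (φ₀ μ : ℝ → ℝ) (ε : ℝ) (f : ℝ → ℝ → ℝ) : ℝ :=
  ∫ p, (f p.1 p.2) ^ 2 / weight φ₀ μ ε p.1 p.2 ∂strip

/-- Inner product of the weighted Hilbert space `H`. -/
def Hinner (φ₀ μ : ℝ → ℝ) (ε : ℝ) (f g : ℝ → ℝ → ℝ) : ℝ :=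
  ∫ p, f p.1 p.2 * g p.1 p.2 / weight φ₀ μ ε p.1 p.2 ∂strip

/-- Membership in the Hilbert space `H`. -/
structure MemH (φ₀ μ : ℝ → ℝ) (ε : ℝ) (f : ℝ → ℝ → ℝ) : Prop where
  meas : Measurable (Function.uncurry f)
  periodic : ∀ x v, f (x + 1) v = f x v
  finite : Integrable (fun p : ℝ × ℝ => (f p.1 p.2) ^ 2 / weight φ₀ μ ε p.1 p.2) strip
  int : Integrable (fun p : ℝ × ℝ => f p.1 p.2) strip
  mean_zero : ∫ p, f p.1 p.2 ∂strip = 0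

/-- Membership in the complexification of the Hilbert space `H`. -/
structure MemHC (φ₀ μ : ℝ → ℝ) (ε : ℝ) (g : ℝ → ℝ → ℂ) : Prop where
  meas : Measurable (Function.uncurry g)
  periodic : ∀ x v, g (x + 1) v = g x v
  finite : Integrable (fun p : ℝ × ℝ => ‖g p.1 p.2‖ ^ 2 / weight φ₀ μ ε p.1 p.2) strip
  int : Integrable (fun p : ℝ × ℝ => g p.1 p.2) strip
  mean_zero : ∫ p, g p.1 p.2 ∂strip = 0

/-- `φf` solves the Poisson equation `∂ₓₓ φ_f = ε ∫ f dv` on the torus. -/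
structure IsPotential (ε : ℝ) (f : ℝ → ℝ → ℝ) (φf : ℝ → ℝ) : Prop where
  periodic : Function.Periodic φf 1
  diff : Differentiable ℝ φf
  poisson : ∀ x, HasDerivAt (deriv φf) (ε * ∫ v, f x v) x

/-- Complex-valued version of the Poisson equation. -/
structure IsPotentialC (ε : ℝ) (g : ℝ → ℝ → ℂ) (φg : ℝ → ℂ) : Prop where
  periodic : Function.Periodic φg 1
  diff : Differentiable ℝ φg
  poisson : ∀ x, HasDerivAt (deriv φg) ((ε : ℂ) * ∫ v, g x v) x

/-- The transport operator `D = v ∂ₓ + φ₀'(x) ∂_v` (strong form). -/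
def transport (φ₀ : ℝ → ℝ) (f : ℝ → ℝ → ℝ) (x v : ℝ) : ℝ :=
  v * deriv (fun x' => f x' v) x + deriv φ₀ x * deriv (f x) v

/-- Test functions for the weak formulation of the transport operator. -/
structure TestFun (χ : ℝ → ℝ → ℝ) : Prop where
  smooth : ContDiff ℝ (⊤ : ℕ∞) (Function.uncurry χ)
  periodic : ∀ x v, χ (x + 1) v = χ x v
  support : ∃ R : ℝ, ∀ x v : ℝ, R ≤ |v| → χ x v = 0

/-- `w = D f` weakly (`f` belongs to the domain `D(D)` with weak transport `w`). -/
def IsWeakTransport (φ₀ : ℝ → ℝ) (f w : ℝ → ℝ → ℝ) : Prop :=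
  ∀ χ : ℝ → ℝ → ℝ, TestFun χ →
    ∫ p, f p.1 p.2 * transport φ₀ χ p.1 p.2 ∂strip = -∫ p, w p.1 p.2 * χ p.1 p.2 ∂strip

/-- Complex-valued version of the weak transport relation. -/
def IsWeakTransportC (φ₀ : ℝ → ℝ) (g w : ℝ → ℝ → ℂ) : Prop :=
  ∀ χ : ℝ → ℝ → ℝ, TestFun χ →
    ∫ p, g p.1 p.2 * (transport φ₀ χ p.1 p.2 : ℂ) ∂strip
      = -∫ p, w p.1 p.2 * (χ p.1 p.2 : ℂ) ∂strip

/-- The nonlocal term `ε² μ'(ε²E) v ∂ₓφ_g` of the linearised operator, complexified. -/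
def nonlocalC (φ₀ μ : ℝ → ℝ) (ε : ℝ) (φg : ℝ → ℂ) (x v : ℝ) : ℂ :=
  ((ε ^ 2 * deriv μ (ε ^ 2 * energy φ₀ x v) * v : ℝ) : ℂ) * deriv φg x

/-- `g ∈ D(D)` is an eigenfunction of the linearised operator `𝓛 g = D g + ε²μ'(ε²E)v∂ₓφ_g`
with eigenvalue `lam`, i.e. `D g = lam • g − ε²μ'(ε²E)v∂ₓφ_g` weakly. -/
def IsEigenfunction (φ₀ μ : ℝ → ℝ) (ε : ℝ) (g : ℝ → ℝ → ℂ) (φg : ℝ → ℂ) (lam : ℂ) : Prop :=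
  MemHC φ₀ μ ε g ∧ IsPotentialC ε g φg ∧
    IsWeakTransportC φ₀ g (fun x v => lam * g x v - nonlocalC φ₀ μ ε φg x v)

/-- The characteristic flow `s ↦ (X(s,E), V(s,E))` starting at the left turning point. -/
structure FlowHyp (φ₀ xm : ℝ → ℝ) (Emin : ℝ) (X V : ℝ → ℝ → ℝ) : Prop where
  flow_x : ∀ E : ℝ, Emin < E → E ≠ 0 → ∀ s : ℝ, HasDerivAt (fun s' => X s' E) (V s E) s
  flow_v : ∀ E : ℝ, Emin < E → E ≠ 0 →
    ∀ s : ℝ, HasDerivAt (fun s' => V s' E) (deriv φ₀ (X s E)) s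
  init_x : ∀ E : ℝ, X 0 E = xm E
  init_v : ∀ E : ℝ, V 0 E = Real.sqrt (2 * (E + φ₀ (xm E)))

/-- Angular Fourier coefficient of `g` along the branch `v ≥ 0`
(for trapped energies this parametrises the full periodic orbit). -/
def gHatPlus (φ₀ xm xp : ℝ → ℝ) (X V : ℝ → ℝ → ℝ) (g : ℝ → ℝ → ℂ) (l : ℤ) (E : ℝ) : ℂ :=
  ∫ θ in (0 : ℝ)..1,
    g (X (θ * period φ₀ xm xp E) E) (V (θ * period φ₀ xm xp E) E) *
      Complex.exp ((((-2) * Real.pi * (l : ℝ) * θ : ℝ) : ℂ) * Complex.I)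

/-- Angular Fourier coefficient of `g` along the branch `v < 0` outside the separatrix. -/
def gHatMinus (φ₀ xm xp : ℝ → ℝ) (X V : ℝ → ℝ → ℝ) (g : ℝ → ℝ → ℂ) (l : ℤ) (E : ℝ) : ℂ :=
  ∫ θ in (0 : ℝ)..1,
    g (X (θ * period φ₀ xm xp E) E) (-(V (θ * period φ₀ xm xp E) E)) *
      Complex.exp ((((-2) * Real.pi * (l : ℝ) * θ : ℝ) : ℂ) * Complex.I)

/-- Angular Fourier coefficient `φ̂_g(ℓ,E)` of the electrostatic potential. -/
def phiHat (φ₀ xm xp : ℝ → ℝ) (X : ℝ → ℝ → ℝ) (φg : ℝ → ℂ) (l : ℤ) (E : ℝ) : ℂ :=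
  ∫ θ in (0 : ℝ)..1,
    φg (X (θ * period φ₀ xm xp E) E) *
      Complex.exp ((((-2) * Real.pi * (l : ℝ) * θ : ℝ) : ℂ) * Complex.I)

/-- Indicator function of a set of energies. -/
def ind (s : Set ℝ) (E : ℝ) : ℝ := s.indicator (fun _ => (1 : ℝ)) E

/-- The elliptic energy region `I^ell = (E_min, E*/2)`. -/
def Iellset (Emin Estar : ℝ) : Set ℝ := Ioo Emin (Estar / 2)

/-- The hyperbolic energy region `I^hyp = (E*,0) ∪ (0,|E*|)`. -/
def Ihypset (Estar : ℝ) : Set ℝ := Ioo Estar 0 ∪ Ioo 0 |Estar|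

/-- The exterior energy region `I^ext = (|E*|/2, ∞)`. -/
def Iextset (Estar : ℝ) : Set ℝ := Ioi (|Estar| / 2)

/-- The choice of `E* ∈ (E_min,0)` with `φ₀'' > 0` on `[0,x₋(E*)] ∪ [x₊(E*),1]`. -/
def EstarHyp (φ₀ xm xp : ℝ → ℝ) (Emin Estar : ℝ) : Prop :=
  Estar ∈ Ioo Emin 0 ∧
    ∀ x : ℝ, x ∈ Icc 0 (xm Estar) ∪ Icc (xp Estar) 1 → 0 < deriv (deriv φ₀) x

/-- The control parameter `δ`. -/
def DeltaHyp (φ₀ xm xp : ℝ → ℝ) (Estar δ : ℝ) : Prop :=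
  0 < δ ∧ δ < 1 ∧
    δ < (period φ₀ xm xp (Estar / 2) - period φ₀ xm xp Estar) / period φ₀ xm xp (Estar / 2) ∧
    δ < (period φ₀ xm xp (|Estar| / 2) - period φ₀ xm xp |Estar|) / period φ₀ xm xp |Estar|

/-- Resonant energies in the trapped region: `T(E_ℓ) = factor · ℓ q` when attainable,
and `E_ℓ = E_min` otherwise. -/
structure ResEnergies1 (φ₀ xm xp : ℝ → ℝ) (Emin Tmin q factor : ℝ) (Ef : ℕ → ℝ) : Prop where
  res : ∀ l : ℕ, 0 < l → Tmin ≤ factor * l * q →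
    Ef l ∈ Ico Emin 0 ∧ period φ₀ xm xp (Ef l) = factor * l * q
  min : ∀ l : ℕ, 0 < l → factor * l * q < Tmin → Ef l = Emin

/-- Resonant energies outside the separatrix: `T(E_ℓ) = factor · ℓ q`. -/
structure ResEnergies2 (φ₀ xm xp : ℝ → ℝ) (q factor : ℝ) (Ef : ℕ → ℝ) : Prop where
  res : ∀ l : ℕ, 0 < l → 0 < Ef l ∧ period φ₀ xm xp (Ef l) = factor * l * q

/-- The resonance kernel `T(E)|μ'(ε²E)| / (T(E)/(ℓq) − 1)`. -/
def resKernel (φ₀ xm xp μ : ℝ → ℝ) (ε q : ℝ) (l : ℕ) (E : ℝ) : ℝ :=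
  period φ₀ xm xp E * |deriv μ (ε ^ 2 * E)| / (period φ₀ xm xp E / ((l : ℝ) * q) - 1)

/-- The non-resonant contribution `𝒥_nr`. -/
def Jnr (φ₀ xm xp μ : ℝ → ℝ) (X : ℝ → ℝ → ℝ) (φg : ℝ → ℂ) (ε q : ℝ) (E1δ E2δ : ℕ → ℝ) : ℝ :=
  (∑' n : ℕ, ∫ E in (E1δ (n + 1))..(0 : ℝ),
      resKernel φ₀ xm xp μ ε q (n + 1) E * ‖phiHat φ₀ xm xp X φg ((n : ℤ) + 1) E‖ ^ 2)
  + 2 * ∑' n : ℕ, ∫ E in (0 : ℝ)..(E2δ (n + 1)),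
      resKernel φ₀ xm xp μ ε q (n + 1) E *
        (‖phiHat φ₀ xm xp X φg ((n : ℤ) + 1) E‖ ^ 2
          + ‖phiHat φ₀ xm xp X φg (-((n : ℤ) + 1)) E‖ ^ 2)

/-- The resonant trapped contribution `𝒥_trap`. -/
def Jtrap (φ₀ xm xp μ : ℝ → ℝ) (X : ℝ → ℝ → ℝ) (φg : ℝ → ℂ) (ε q : ℝ) (E1 E1δ : ℕ → ℝ) : ℝ :=
  ∑' n : ℕ, ∫ E in (E1 (n + 1))..(E1δ (n + 1)),
      resKernel φ₀ xm xp μ ε q (n + 1) E * ‖phiHat φ₀ xm xp X φg ((n : ℤ) + 1) E‖ ^ 2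

/-- The resonant exterior contribution `𝒥_ext`. -/
def Jext (φ₀ xm xp μ : ℝ → ℝ) (X : ℝ → ℝ → ℝ) (φg : ℝ → ℂ) (ε q : ℝ) (E2 E2δ : ℕ → ℝ) : ℝ :=
  2 * ∑' n : ℕ, ∫ E in (E2δ (n + 1))..(E2 (n + 1)),
      resKernel φ₀ xm xp μ ε q (n + 1) E *
        (‖phiHat φ₀ xm xp X φg ((n : ℤ) + 1) E‖ ^ 2
          + ‖phiHat φ₀ xm xp X φg (-((n : ℤ) + 1)) E‖ ^ 2)

/-- `T(E)·θ(x,E) = ∫_{x₋(E)}^x (2(E+φ₀(y)))^{−1/2} dy`. -/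
def angleInt (φ₀ xm : ℝ → ℝ) (x E : ℝ) : ℝ :=
  ∫ y in (xm E)..x, (Real.sqrt (2 * (E + φ₀ y)))⁻¹

/-- The operator `L f = f + ε² μ'(ε²E) (φ_f − ∫φ_f dx)`. -/
def Lop (φ₀ μ : ℝ → ℝ) (ε : ℝ) (f : ℝ → ℝ → ℝ) (φf : ℝ → ℝ) (x v : ℝ) : ℝ :=
  f x v + ε ^ 2 * deriv μ (ε ^ 2 * energy φ₀ x v) * (φf x - ∫ y in (0 : ℝ)..1, φf y)

end BGK


section AuxIon

open MeasureTheory Set Filter Topology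
open scoped ENNReal NNReal

private lemma holder_dist_le' {C r : NNReal} {f : ℝ → ℝ} {s : Set ℝ}
    (h : HolderOnWith C r f s) {x y : ℝ} (hx : x ∈ s) (hy : y ∈ s) :
    dist (f x) (f y) ≤ C * dist x y ^ (r : ℝ) := by
  have h1 := h.edist_le hx hy
  have h2 : ((C : ℝ≥0∞) * edist x y ^ (r : ℝ)) ≠ ⊤ :=
    ENNReal.mul_ne_top ENNReal.coe_ne_top
      (ENNReal.rpow_ne_top_of_nonneg r.coe_nonneg (edist_ne_top x y))
  have h3 := (ENNReal.toReal_le_toReal (edist_ne_top _ _) h2).mpr h1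
  rw [ENNReal.toReal_mul, ← ENNReal.toReal_rpow] at h3
  simpa [dist_edist] using h3

private lemma periodic_deriv1 {f : ℝ → ℝ} (h : Function.Periodic f 1) :
    Function.Periodic (deriv f) 1 := by
  intro x
  have hfe : (fun y => f (y + 1)) = f := funext h
  rw [show deriv f (x + 1) = deriv (fun y => f (y + 1)) x from
    (deriv_comp_add_const f 1 x).symm, hfe]

private lemma periodic_fract_eq {f : ℝ → ℝ} (h : Function.Periodic f 1) (x : ℝ) :
    f (Int.fract x) = f x := by
  have h1 := h.sub_int_mul_eq (x := x) (n := ⌊x⌋)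
  have h2 : Int.fract x = x - (⌊x⌋ : ℝ) * 1 := by rw [mul_one]; rfl
  rw [h2, h1]

private lemma periodic_le_max {f : ℝ → ℝ} {x₀ : ℝ} (hper : Function.Periodic f 1)
    (hmem : x₀ ∈ Set.Icc (0 : ℝ) 1)
    (hmax : ∀ x ∈ Set.Icc (0 : ℝ) 1, x ≠ x₀ → f x < f x₀) (x : ℝ) :
    f x ≤ f x₀ := by
  have h1 : f (Int.fract x) = f x := periodic_fract_eq hper x
  have h2 : Int.fract x ∈ Set.Icc (0 : ℝ) 1 :=
    ⟨Int.fract_nonneg x, (Int.fract_lt_one x).le⟩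
  by_cases hx : Int.fract x = x₀
  · rw [← h1, hx]
  · exact (h1 ▸ hmax _ h2 hx).le

end AuxIon

set_option maxHeartbeats 1000000 in
/-- **The ion background can be made arbitrarily close to a constant** (Remark 1.5).
Suppose `∫ μ(v²/2) dv = 1` and `φ̃₀` satisfies (φ1)–(φ4) with `‖φ̃₀‖_{C²} < 1`.
For `δ ∈ (0,1)` set `φ₀ := δ φ̃₀` and
`ρ₊(x) := −φ₀''(x) + ε ∫ μ(ε²(v²/2 − φ₀(x))) dv`. Then
`|ρ₊(x) − 1| ≤ δ‖φ̃₀''‖_∞ + |∫ μ(ṽ²/2 − ε²φ₀(x)) dṽ − 1|` for all `x`, and for all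
sufficiently small `ε > 0` one has `‖ρ₊ − 1‖_{L^∞} ≤ 2δ`. -/
theorem ion_background_close_to_constant
    (h : EReal) (μ : ℝ → ℝ) (hμ : BGK.MuHyp h μ)
    (hnorm : ∫ v : ℝ, μ (v ^ 2 / 2) = 1)
    (φt : ℝ → ℝ) (x₀ : ℝ) (hφt : BGK.PotentialHyp φt x₀)
    (xm xp : ℝ → ℝ) (hx : BGK.TurningHyp φt x₀ xm xp)
    (hφ4 : BGK.PeriodMonotone φt x₀ xm xp)
    (hC2 : ∀ x : ℝ, |φt x| + |deriv φt x| + |deriv (deriv φt) x| < 1)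
    (δ : ℝ) (hδ : δ ∈ Set.Ioo (0 : ℝ) 1)
    (hdom : h < ((-(δ * φt x₀) : ℝ) : EReal))
    (hint : ∀ ε : ℝ, 0 < ε → ∀ x : ℝ, MeasureTheory.Integrable
      (fun v : ℝ => μ (ε ^ 2 * BGK.energy (fun y => δ * φt y) x v))) :
    (∀ ε : ℝ, 0 < ε → ∀ x : ℝ,
      |(-(deriv (deriv (fun y => δ * φt y)) x)
          + ε * ∫ v : ℝ, μ (ε ^ 2 * BGK.energy (fun y => δ * φt y) x v)) - 1|
        ≤ δ * (⨆ y ∈ Set.Icc (0 : ℝ) 1, |deriv (deriv φt) y|)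
          + |(∫ v : ℝ, μ (v ^ 2 / 2 - ε ^ 2 * (δ * φt x))) - 1|) ∧
    (∃ ε₀ > 0, ∀ ε : ℝ, 0 < ε → ε < ε₀ → ∀ x : ℝ,
      |(-(deriv (deriv (fun y => δ * φt y)) x)
          + ε * ∫ v : ℝ, μ (ε ^ 2 * BGK.energy (fun y => δ * φt y) x v)) - 1| ≤ 2 * δ) := by
  obtain ⟨hδ0, hδ1⟩ := hδ
  -- basic differentiability facts
  have hd1 : Differentiable ℝ φt := hφt.smooth.differentiable (by norm_num)
  have hcd2 : ContDiff ℝ 2 (deriv φt) := by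
    have h3 : ContDiff ℝ (2 + 1 : ℕ) φt := by exact_mod_cast hφt.smooth
    exact (contDiff_succ_iff_deriv.mp (by exact_mod_cast h3)).2.2
  have hd2 : Differentiable ℝ (deriv φt) := hcd2.differentiable (by norm_num)
  have hderiv2 : ∀ x : ℝ, deriv (deriv (fun y => δ * φt y)) x = δ * deriv (deriv φt) x := by
    intro x
    have h1 : deriv (fun y => δ * φt y) = fun y => δ * deriv φt y :=
      funext fun y => deriv_const_mul δ (hd1 y)
    rw [h1]
    exact deriv_const_mul δ (hd2 x)
  -- the sup of |φt''| on [0,1]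
  set S : ℝ := ⨆ y ∈ Set.Icc (0 : ℝ) 1, |deriv (deriv φt) y| with hSdef
  have habs : ∀ y : ℝ, |deriv (deriv φt) y| ≤ 1 := by
    intro y
    have := hC2 y
    have h1 := abs_nonneg (φt y)
    have h2 := abs_nonneg (deriv φt y)
    linarith
  have hSle1 : S ≤ 1 :=
    Real.iSup_le (fun y => Real.iSup_le (fun _ => habs y) one_pos.le) one_pos.le
  have hbdd : BddAbove (Set.range fun y =>
      ⨆ _ : y ∈ Set.Icc (0 : ℝ) 1, |deriv (deriv φt) y|) := by
    refine ⟨1, ?_⟩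
    rintro _ ⟨y, rfl⟩
    exact Real.iSup_le (fun _ => habs y) one_pos.le
  have habsS : ∀ x : ℝ, |deriv (deriv φt) x| ≤ S := by
    intro x
    have hper2 : Function.Periodic (deriv (deriv φt)) 1 :=
      periodic_deriv1 (periodic_deriv1 hφt.periodic)
    have hx' : Int.fract x ∈ Set.Icc (0 : ℝ) 1 :=
      ⟨Int.fract_nonneg x, (Int.fract_lt_one x).le⟩
    have heq : |deriv (deriv φt) x| = |deriv (deriv φt) (Int.fract x)| := by
      rw [periodic_fract_eq hper2]
    rw [heq, hSdef]
    refine le_ciSup_of_le hbdd (Int.fract x) ?_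
    rw [ciSup_pos hx']
  -- scaling identity
  have hscale : ∀ ε : ℝ, 0 < ε → ∀ x : ℝ,
      ε * ∫ v : ℝ, μ (ε ^ 2 * BGK.energy (fun y => δ * φt y) x v)
        = ∫ v : ℝ, μ (v ^ 2 / 2 - ε ^ 2 * (δ * φt x)) := by
    intro ε hε x
    have hfe : (fun v : ℝ => μ (ε ^ 2 * BGK.energy (fun y => δ * φt y) x v))
        = fun v : ℝ => μ ((ε * v) ^ 2 / 2 - ε ^ 2 * (δ * φt x)) := by
      funext v
      unfold BGK.energy
      congr 1
      ring
    rw [hfe, MeasureTheory.Measure.integral_comp_mul_left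
      (fun u : ℝ => μ (u ^ 2 / 2 - ε ^ 2 * (δ * φt x))) ε]
    rw [abs_of_pos (inv_pos.mpr hε), smul_eq_mul, ← mul_assoc,
      mul_inv_cancel₀ hε.ne', one_mul]
  -- part 1
  have part1 : ∀ ε : ℝ, 0 < ε → ∀ x : ℝ,
      |(-(deriv (deriv (fun y => δ * φt y)) x)
          + ε * ∫ v : ℝ, μ (ε ^ 2 * BGK.energy (fun y => δ * φt y) x v)) - 1|
        ≤ δ * S + |(∫ v : ℝ, μ (v ^ 2 / 2 - ε ^ 2 * (δ * φt x))) - 1| := by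
    intro ε hε x
    rw [hderiv2 x, hscale ε hε x]
    set I : ℝ := ∫ v : ℝ, μ (v ^ 2 / 2 - ε ^ 2 * (δ * φt x)) with hI
    have hre : (-(δ * deriv (deriv φt) x) + I) - 1
        = (-(δ * deriv (deriv φt) x)) + (I - 1) := by ring
    rw [hre]
    refine (abs_add_le _ _).trans ?_
    have h1 : |(-(δ * deriv (deriv φt) x))| ≤ δ * S := by
      rw [abs_neg, abs_mul, abs_of_pos hδ0]
      exact mul_le_mul_of_nonneg_left (habsS x) hδ0.le
    linarith
  refine ⟨part1, ?_⟩
  -- part 2 : the limit argument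
  set a₀ : ℝ := δ * φt x₀ with ha₀def
  have ha₀pos : 0 < a₀ := mul_pos hδ0 hφt.max_pos
  have hS0 : ∀ e : ℝ, -a₀ ≤ e → h < (e : EReal) := by
    intro e he
    refine lt_of_lt_of_le hdom ?_
    exact_mod_cast he
  obtain ⟨C, hHol⟩ := hμ.holder
  have hcont : ContinuousOn μ {e : ℝ | h < (e : EReal)} :=
    hHol.continuousOn (by norm_num)
  -- bound on the compact core
  obtain ⟨K, hK⟩ := (isCompact_Icc (a := -a₀) (b := 2 * a₀)).exists_bound_of_continuousOn
    (hcont.mono (fun e he => hS0 e he.1))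
  -- integrable majorant
  have hbase : Integrable (fun v : ℝ => μ (v ^ 2 / 2 - a₀)) := by
    have := hint 1 one_pos x₀
    simpa [BGK.energy, ha₀def] using this
  set s : ℝ := 2 * Real.sqrt a₀ with hsdef
  have hs0 : 0 ≤ s := by positivity
  have hssq : s ^ 2 = 4 * a₀ := by
    rw [hsdef, mul_pow, Real.sq_sqrt ha₀pos.le]
    ring
  set g : ℝ → ℝ := fun v =>
    (Set.Icc (-s) s).indicator (fun _ => K) v + μ (v ^ 2 / 2 - a₀) with hgdef
  have hgint : Integrable g := by
    refine Integrable.add ?_ hbase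
    rw [integrable_indicator_iff measurableSet_Icc]
    exact (integrableOn_const_iff (by simp)).mpr (Or.inr measure_Icc_lt_top)
  have hevIoc : ∀ᶠ a : ℝ in 𝓝[>] (0 : ℝ), a ∈ Set.Ioc (0 : ℝ) a₀ :=
    Ioc_mem_nhdsGT_of_mem ⟨le_rfl, ha₀pos⟩
  have hmemS : ∀ (a : ℝ), a ∈ Set.Ioc (0 : ℝ) a₀ → ∀ v : ℝ,
      (v ^ 2 / 2 - a) ∈ {e : ℝ | h < (e : EReal)} := by
    intro a ha v
    exact hS0 _ (by nlinarith [sq_nonneg v, ha.1, ha.2])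
  have hmeas_ev : ∀ᶠ a : ℝ in 𝓝[>] (0 : ℝ),
      AEStronglyMeasurable (fun v : ℝ => μ (v ^ 2 / 2 - a)) volume := by
    filter_upwards [hevIoc] with a ha
    have hc : Continuous fun v : ℝ => μ (v ^ 2 / 2 - a) := by
      refine hcont.comp_continuous (by fun_prop) ?_
      exact hmemS a ha
    exact hc.aestronglyMeasurable
  have hbound_ev : ∀ᶠ a : ℝ in 𝓝[>] (0 : ℝ),
      ∀ᵐ v : ℝ, ‖μ (v ^ 2 / 2 - a)‖ ≤ g v := by
    filter_upwards [hevIoc] with a ha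
    refine Filter.Eventually.of_forall fun v => ?_
    by_cases hv : v ∈ Set.Icc (-s) s
    · have hv2 : v ^ 2 ≤ 4 * a₀ := by
        rw [Set.mem_Icc] at hv
        nlinarith [hv.1, hv.2]
      have h1 : ‖μ (v ^ 2 / 2 - a)‖ ≤ K := by
        refine hK _ ⟨by nlinarith [sq_nonneg v, ha.1, ha.2], by nlinarith [ha.1, ha.2]⟩
      have h2 : 0 ≤ μ (v ^ 2 / 2 - a₀) :=
        (hμ.pos _ (hS0 _ (by nlinarith [sq_nonneg v]))).le
      rw [hgdef]
      simp only [Set.indicator_of_mem hv]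
      linarith
    · have hv2 : 4 * a₀ < v ^ 2 := by
        rw [Set.mem_Icc, not_and_or, not_le, not_le] at hv
        rcases hv with hv | hv <;> nlinarith [hs0]
      have hx1 : (v ^ 2 / 2 - a₀ : ℝ) ∈ Set.Ioi (0 : ℝ) := by
        simp only [Set.mem_Ioi]; nlinarith
      have hx2 : (v ^ 2 / 2 - a : ℝ) ∈ Set.Ioi (0 : ℝ) := by
        simp only [Set.mem_Ioi]; nlinarith [ha.2]
      have hpos : 0 < μ (v ^ 2 / 2 - a) := hμ.pos _ (hmemS a ha v)
      rw [hgdef]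
      simp only [Set.indicator_of_notMem hv, zero_add, Real.norm_eq_abs,
        abs_of_pos hpos]
      exact hμ.mono_pos.antitoneOn hx1 hx2 (by linarith [ha.2, ha.1])
  have hlim : ∀ᵐ v : ℝ, Tendsto (fun a : ℝ => μ (v ^ 2 / 2 - a)) (𝓝[>] (0 : ℝ))
      (𝓝 (μ (v ^ 2 / 2))) := by
    refine Filter.Eventually.of_forall fun v => ?_
    rw [tendsto_iff_dist_tendsto_zero]
    have hb : ∀ᶠ a : ℝ in 𝓝[>] (0 : ℝ),
        dist (μ (v ^ 2 / 2 - a)) (μ (v ^ 2 / 2)) ≤ (C : ℝ) * a ^ ((1 : ℝ) / 2) := by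
      filter_upwards [hevIoc] with a ha
      have h1 := holder_dist_le' hHol (hmemS a ha v)
        (hS0 (v ^ 2 / 2) (by nlinarith [sq_nonneg v]))
      have h2 : dist (v ^ 2 / 2 - a) (v ^ 2 / 2) = a := by
        rw [Real.dist_eq, abs_of_nonpos (by linarith [ha.1])]
        ring
      have h3 : ((1 / 2 : NNReal) : ℝ) = (1 : ℝ) / 2 := by norm_num
      rw [h2, h3] at h1
      exact h1
    have htz : Tendsto (fun a : ℝ => (C : ℝ) * a ^ ((1 : ℝ) / 2)) (𝓝[>] (0 : ℝ))
        (𝓝 0) := by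
      have h1 : Tendsto (fun a : ℝ => a ^ ((1 : ℝ) / 2)) (𝓝 (0 : ℝ))
          (𝓝 ((0 : ℝ) ^ ((1 : ℝ) / 2))) :=
        (Real.continuousAt_rpow_const 0 (1 / 2) (Or.inr (by norm_num))).tendsto
      rw [Real.zero_rpow (by norm_num)] at h1
      have h2 : Tendsto (fun a : ℝ => (C : ℝ) * a ^ ((1 : ℝ) / 2)) (𝓝[>] (0 : ℝ))
          (𝓝 ((C : ℝ) * 0)) := (h1.const_mul (C : ℝ)).mono_left nhdsWithin_le_nhds
      simpa using h2
    exact squeeze_zero' (Filter.Eventually.of_forall fun a => dist_nonneg) hb htz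
  have hTend : Tendsto (fun a : ℝ => ∫ v : ℝ, μ (v ^ 2 / 2 - a)) (𝓝[>] (0 : ℝ))
      (𝓝 (∫ v : ℝ, μ (v ^ 2 / 2))) :=
    MeasureTheory.tendsto_integral_filter_of_dominated_convergence g hmeas_ev hbound_ev
      hgint hlim
  rw [hnorm] at hTend
  have hev : {a : ℝ | (∫ v : ℝ, μ (v ^ 2 / 2 - a)) ∈ Metric.ball (1 : ℝ) δ}
      ∈ 𝓝[>] (0 : ℝ) := hTend (Metric.ball_mem_nhds (1 : ℝ) hδ0)
  obtain ⟨a₁, ha₁, hsub⟩ := Metric.mem_nhdsWithin_iff.mp hev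
  -- choose ε₀
  refine ⟨min 1 (Real.sqrt (a₁ / a₀)), lt_min one_pos (Real.sqrt_pos.mpr (by positivity)), ?_⟩
  intro ε hε hεε₀ x
  refine (part1 ε hε x).trans ?_
  have hδS : δ * S ≤ δ := by nlinarith
  have hmain : |(∫ v : ℝ, μ (v ^ 2 / 2 - ε ^ 2 * (δ * φt x))) - 1| ≤ δ := by
    rcases eq_or_lt_of_le (hφt.nonneg x) with hx0 | hx0
    · have hfe : ∀ v : ℝ, v ^ 2 / 2 - ε ^ 2 * (δ * φt x) = v ^ 2 / 2 := by
        intro v; rw [← hx0]; ring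
      simp only [hfe]
      rw [hnorm]
      simpa using hδ0.le
    · set aε : ℝ := ε ^ 2 * (δ * φt x) with haεdef
      have haεpos : 0 < aε := by positivity
      have hφle : φt x ≤ φt x₀ :=
        periodic_le_max hφt.periodic
          ⟨hφt.x₀_mem.1.le, hφt.x₀_mem.2.le⟩ hφt.uniq_max x
      have hεsq : ε ^ 2 < a₁ / a₀ := by
        have h1 : ε < Real.sqrt (a₁ / a₀) :=
          lt_of_lt_of_le hεε₀ (min_le_right _ _)
        nlinarith [Real.sq_sqrt (show (0 : ℝ) ≤ a₁ / a₀ by positivity),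
          Real.sqrt_nonneg (a₁ / a₀)]
      have haεlt : aε < a₁ := by
        have h1 : aε ≤ ε ^ 2 * a₀ := by
          rw [haεdef, ha₀def]
          nlinarith [sq_nonneg ε]
        have h2 : ε ^ 2 * a₀ < a₁ := (lt_div_iff₀ ha₀pos).mp hεsq
        linarith
      have hmem : aε ∈ Metric.ball (0 : ℝ) a₁ ∩ Set.Ioi (0 : ℝ) := by
        constructor
        · rw [Metric.mem_ball, Real.dist_eq, sub_zero, abs_of_pos haεpos]
          exact haεlt
        · exact haεpos
      have := hsub hmem
      rw [Set.mem_setOf_eq, Metric.mem_ball, Real.dist_eq] at this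
      exact this.le
  linarith
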